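/- For every positive odd integer n and integer m with 1 ≤ m ≤ (n+1)/2: sum_{k=0}^{n-m} (q^{2m-1};q^2)_k / (q;q)_k * q^{2k} ≡ (-1)^{(n-1)/2 + m - 1} * q^{(n^2-1)/4 - m^2 - m + 1} (mod Phi_n(q)). -/

import Mathlib

/-!
Let `ζ` be a primitive `n`-th root of unity and `n = 2m + 2s - 1`. The factor
`1 - ζ^(2m-1) ζ^(2s) = 1 - ζ^n` kills every term with `k > s`, and reflecting `k ↦ s - k`
turns `ζ^(s²)` times the remaining sum into `(-1)^s ζ^s` times
`∑ₖ (-1)^k ζ^(k(k-1)) (ζ²;ζ²)_s / ((ζ²;ζ²)_k (ζ;ζ)_(s-k))`.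
For an indeterminate `q` in place of `ζ` this last sum is `(q²;q²)_s` times the coefficient
of `t^s` in `(t;q²)_∞ / (t;q)_∞ = 1 / (tq;q²)_∞`, that is `q^s`; the identity is proved by a
Wilf–Zeilberger recurrence in `s` and holds as soon as `ζ^i ≠ 1` for `0 < i ≤ 2s`. So both
sides of the congruence are regular at `ζ` with the same value, and a rational function
regular at `ζ` and vanishing there is divisible by `Φ_n`, the minimal polynomial of `ζ`.
-/

open Finset Polynomial

/-- The q-Pochhammer symbol `(a; q)_n` in the field of rational functions. -/
noncomputable def qPoch (a q : RatFunc ℚ) (n : ℕ) : RatFunc ℚ :=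
  ∏ j ∈ Finset.range n, (1 - a * q ^ j)

/-- `A ≡ B (mod Φ_n(q)^e)` in the localization of `ℚ[q]` at the n-th cyclotomic
polynomial. -/
def CongrModCyclo (n e : ℕ) (A B : RatFunc ℚ) : Prop :=
  ∃ u v : Polynomial ℚ, ¬ (Polynomial.cyclotomic n ℚ ∣ v) ∧
    (A - B) * algebraMap (Polynomial ℚ) (RatFunc ℚ) v
      = algebraMap (Polynomial ℚ) (RatFunc ℚ) ((Polynomial.cyclotomic n ℚ) ^ e * u)

noncomputable def q : RatFunc ℚ := RatFunc.X

section qPochhammer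

variable {R : Type*} [CommRing R]

def qPochhammer (a q : R) (n : ℕ) : R :=
  ∏ j ∈ range n, (1 - a * q ^ j)

@[simp]
theorem qPochhammer_zero (a q : R) : qPochhammer a q 0 = 1 := by
  simp [qPochhammer]

theorem qPochhammer_succ (a q : R) (n : ℕ) :
    qPochhammer a q (n + 1) = qPochhammer a q n * (1 - a * q ^ n) :=
  prod_range_succ _ n

theorem qPochhammer_succ' (a q : R) (n : ℕ) :
    qPochhammer a q (n + 1) = (1 - a) * qPochhammer (a * q) q n := by
  simp only [qPochhammer, prod_range_succ', pow_succ, pow_zero, mul_one, mul_assoc, mul_comm q]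
  ring

theorem qPochhammer_eq_zero {a q : R} {j n : ℕ} (h : a * q ^ j = 1) (hj : j < n) :
    qPochhammer a q n = 0 :=
  prod_eq_zero (mem_range.2 hj) (by rw [h, sub_self])

theorem qPochhammer_self_ne_zero [IsDomain R] {z : R} {n : ℕ}
    (hz : ∀ i, 0 < i → i ≤ n → z ^ i ≠ 1) : qPochhammer z z n ≠ 0 :=
  prod_ne_zero_iff.2 fun j hj => by
    rw [← pow_succ']
    exact sub_ne_zero.2 (hz (j + 1) j.succ_pos (mem_range.1 hj)).symm

/-- For `a = z^(-2(k+r))` the factors of `(a; z²)_k` are, up to sign and powers of `z`, the top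
`k` factors of `(z²; z²)_(k+r)`. -/
theorem pow_mul_qPochhammer_mul_qPochhammer {a z : R} (k r : ℕ) (ha : a * z ^ (2 * (k + r)) = 1) :
    z ^ ((k + r) ^ 2) * qPochhammer a (z ^ 2) k * z ^ (2 * k) * qPochhammer (z ^ 2) (z ^ 2) r
      = (-1) ^ k * z ^ (r ^ 2 + k) * qPochhammer (z ^ 2) (z ^ 2) (k + r) := by
  induction k generalizing a with
  | zero => simp
  | succ k ih =>
    have ih' := ih (a := a * z ^ 2) (by rw [← ha]; ring)
    rw [qPochhammer_succ', Nat.add_right_comm, qPochhammer_succ]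
    linear_combination (z ^ (2 * (k + r) + 3) * (1 - a)) * ih'
      - (-1) ^ k * z ^ (r ^ 2 + k + 1) * qPochhammer (z ^ 2) (z ^ 2) (k + r) * ha

end qPochhammer

section EulerSum

variable {K : Type*} [Field K]

theorem qPochhammer_sq_ne_zero {z : K} {n : ℕ}
    (hz : ∀ i, 0 < i → i ≤ 2 * n → z ^ i ≠ 1) :
    qPochhammer (z ^ 2) (z ^ 2) n ≠ 0 :=
  qPochhammer_self_ne_zero fun i hi hin => by
    rw [← pow_mul]
    exact hz _ (by omega) (by omega)

def eulerTerm (z : K) (s k : ℕ) : K :=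
  (-1) ^ k * z ^ (k * (k - 1)) * qPochhammer (z ^ 2) (z ^ 2) s
    / (qPochhammer (z ^ 2) (z ^ 2) k * qPochhammer z z (s - k))

private theorem mul_sub_one_add_two_mul (j : ℕ) : j * (j - 1) + 2 * j = (j + 1) * j := by
  cases j
  · rfl
  · simp only [Nat.add_sub_cancel]
    ring

theorem eulerTerm_succ_zero {z : K} {s : ℕ} (hz : ∀ i, 0 < i → i ≤ s + 1 → z ^ i ≠ 1) :
    eulerTerm z (s + 1) 0 = (1 + z ^ (s + 1)) * eulerTerm z s 0 := by
  obtain ⟨hD, h1⟩ := mul_ne_zero_iff.1 (qPochhammer_succ z z s ▸ qPochhammer_self_ne_zero hz)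
  simp only [eulerTerm, Nat.sub_zero, qPochhammer_succ z z s, qPochhammer_succ (z ^ 2) (z ^ 2) s]
  field_simp
  ring

theorem eulerTerm_succ_right {z : K} {s j : ℕ} (hj : j < s)
    (hz : ∀ i, 0 < i → i ≤ 2 * s → z ^ i ≠ 1) :
    eulerTerm z s (j + 1) * (1 - z ^ (2 * j + 2))
      = -z ^ (2 * j) * (1 - z ^ (s - j)) * eulerTerm z s j := by
  obtain ⟨r, rfl⟩ : ∃ r, s = j + 1 + r := ⟨s - j - 1, by omega⟩
  obtain ⟨hQ, h2⟩ := mul_ne_zero_iff.1 (qPochhammer_succ (z ^ 2) (z ^ 2) j ▸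
    qPochhammer_sq_ne_zero (n := j + 1) fun i hi hs => hz i hi (by omega))
  obtain ⟨hD, h1⟩ := mul_ne_zero_iff.1 (qPochhammer_succ z z r ▸
    qPochhammer_self_ne_zero (n := r + 1) fun i hi hs => hz i hi (by omega))
  rw [eulerTerm, eulerTerm, Nat.add_sub_cancel, ← mul_sub_one_add_two_mul, pow_add,
    show j + 1 + r - (j + 1) = r by omega, show j + 1 + r - j = r + 1 by omega,
    qPochhammer_succ (z ^ 2) (z ^ 2) j, qPochhammer_succ z z r]
  field_simp
  ring

theorem eulerTerm_succ_succ {z : K} {s j : ℕ} (hj : j ≤ s)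
    (hz : ∀ i, 0 < i → i ≤ 2 * (s + 1) → z ^ i ≠ 1) :
    eulerTerm z (s + 1) (j + 1) * (1 - z ^ (2 * j + 2))
      = -z ^ (2 * j) * (1 - z ^ (2 * s + 2)) * eulerTerm z s j := by
  obtain ⟨hQ, h2⟩ := mul_ne_zero_iff.1 (qPochhammer_succ (z ^ 2) (z ^ 2) j ▸
    qPochhammer_sq_ne_zero (n := j + 1) fun i hi hs => hz i hi (by omega))
  have hD := qPochhammer_self_ne_zero (z := z) (n := s - j) fun i hi hs => hz i hi (by omega)
  rw [eulerTerm, eulerTerm, Nat.add_sub_cancel, ← mul_sub_one_add_two_mul, pow_add,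
    Nat.add_sub_add_right, qPochhammer_succ (z ^ 2) (z ^ 2) j, qPochhammer_succ (z ^ 2) (z ^ 2) s]
  field_simp
  ring

/-- Wilf–Zeilberger certificate: `eulerTerm z (s + 1) k - z * eulerTerm z s k` telescopes. -/
def eulerCert (z : K) (s : ℕ) : ℕ → K
  | 0 => 0
  | k + 1 => eulerTerm z s k * z ^ k * (z ^ (s + 1) + z ^ k - z ^ (k + 1))

theorem eulerTerm_succ_eq {z : K} {s k : ℕ} (hk : k ≤ s)
    (hz : ∀ i, 0 < i → i ≤ 2 * (s + 1) → z ^ i ≠ 1) :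
    eulerTerm z (s + 1) k = z * eulerTerm z s k + (eulerCert z s (k + 1) - eulerCert z s k) := by
  cases k with
  | zero =>
    rw [eulerTerm_succ_zero fun i hi hs => hz i hi (by omega), eulerCert, eulerCert]
    ring
  | succ j =>
    obtain ⟨r, rfl⟩ : ∃ r, s = j + 1 + r := ⟨s - j - 1, by omega⟩
    have hd : 1 - z ^ (2 * j + 2) ≠ 0 := sub_ne_zero.2 (hz _ (by omega) (by omega)).symm
    have hright := eulerTerm_succ_right (z := z) (s := j + 1 + r) (j := j) (by omega)
      fun i hi hs => hz i hi (by omega)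
    rw [show j + 1 + r - j = r + 1 by omega] at hright
    refine mul_right_cancel₀ hd ?_
    simp only [eulerCert]
    linear_combination eulerTerm_succ_succ (j := j) (by omega) hz
      - (z + z ^ (j + 1) * (z ^ (j + 1 + r + 1) + z ^ (j + 1) - z ^ (j + 1 + 1))) * hright

theorem sum_eulerTerm {z : K} {s : ℕ} (hz : ∀ i, 0 < i → i ≤ 2 * s → z ^ i ≠ 1) :
    ∑ k ∈ range (s + 1), eulerTerm z s k = z ^ s := by
  induction s with
  | zero => simp [eulerTerm]
  | succ s ih =>
    have hd : 1 - z ^ (2 * s + 2) ≠ 0 := sub_ne_zero.2 (hz _ (by omega) (by omega)).symm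
    have htop : eulerTerm z (s + 1) (s + 1) = -z ^ (2 * s) * eulerTerm z s s :=
      mul_right_cancel₀ hd ((eulerTerm_succ_succ le_rfl hz).trans (by ring))
    rw [sum_range_succ,
      sum_congr rfl fun k hk => eulerTerm_succ_eq (Nat.lt_succ_iff.1 (mem_range.1 hk)) hz,
      sum_add_distrib, ← mul_sum, sum_range_sub, ih fun i hi hs => hz i hi (by omega), htop]
    simp only [eulerCert]
    ring

theorem pow_sq_mul_sum_qPochhammer {a z : K} {s : ℕ} (ha : a * z ^ (2 * s) = 1)
    (hz : ∀ i, 0 < i → i ≤ 2 * s → z ^ i ≠ 1) :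
    z ^ (s ^ 2) * ∑ k ∈ range (s + 1), qPochhammer a (z ^ 2) k / qPochhammer z z k * z ^ (2 * k)
      = (-1) ^ s * z ^ (2 * s) := by
  have hterm : ∀ k ∈ range (s + 1), z ^ (s ^ 2) *
      (qPochhammer a (z ^ 2) k / qPochhammer z z k * z ^ (2 * k))
        = (-1) ^ s * z ^ s * eulerTerm z s (s - k) := by
    intro k hk
    obtain ⟨r, rfl⟩ : ∃ r, s = k + r := ⟨s - k, by have := mem_range.1 hk; omega⟩
    have hD := qPochhammer_self_ne_zero (z := z) (n := k) fun i hi hs => hz i hi (by omega)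
    have hQ := qPochhammer_sq_ne_zero (z := z) (n := r) fun i hi hs => hz i hi (by omega)
    have hlink := pow_mul_qPochhammer_mul_qPochhammer k r ha
    have hexp : r * (r - 1) + r = r ^ 2 := by cases r <;> simp; ring
    have hsign : ((-1 : K) ^ r) ^ 2 = 1 := by rw [← pow_mul, mul_comm, pow_mul]; simp
    rw [← hexp, pow_add] at hlink
    rw [eulerTerm, show k + r - (k + r - k) = k by omega, show k + r - k = r by omega]
    field_simp
    linear_combination hlink - (-1) ^ k * z ^ (k + r) * z ^ (r * (r - 1))
      * qPochhammer (z ^ 2) (z ^ 2) (k + r) * hsign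
  rw [mul_sum, sum_congr rfl hterm, ← mul_sum,
    show ∑ k ∈ range (s + 1), eulerTerm z s (s - k) = ∑ k ∈ range (s + 1), eulerTerm z s k
      from sum_range_reflect (eulerTerm z s) (s + 1), sum_eulerTerm hz]
  ring

end EulerSum

theorem IsPrimitiveRoot.pow_sq_mul_sum_qPochhammer {K : Type*} [Field K] {ζ : K} {n m s : ℕ}
    (hζ : IsPrimitiveRoot ζ n) (hm : 1 ≤ m) (hs : n + 1 = 2 * m + 2 * s) :
    ζ ^ (s ^ 2) * ∑ k ∈ range (n - m + 1),
        qPochhammer (ζ ^ (2 * m - 1)) (ζ ^ 2) k / qPochhammer ζ ζ k * ζ ^ (2 * k)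
      = (-1) ^ s * ζ ^ (2 * s) := by
  have ha : ζ ^ (2 * m - 1) * ζ ^ (2 * s) = 1 := by
    rw [← pow_add, show 2 * m - 1 + 2 * s = n by omega, hζ.pow_eq_one]
  rw [← sum_subset (range_subset_range.2 (by omega : s + 1 ≤ n - m + 1))]
  · exact _root_.pow_sq_mul_sum_qPochhammer ha fun i hi hs =>
      hζ.pow_ne_one_of_pos_of_lt hi.ne' (by omega)
  · intro k hk hks
    rw [qPochhammer_eq_zero (j := s) (by rwa [← pow_mul]) (by simp at hk hks; omega),
      zero_div, zero_mul]

namespace RatFunc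

variable {F K : Type*} [Field F] [Field K] [Algebra F K]

def HasEvalAt (ζ : K) (A : RatFunc F) (x : K) : Prop :=
  ∃ a v : F[X], aeval ζ v ≠ 0 ∧
    A * algebraMap F[X] (RatFunc F) v = algebraMap F[X] (RatFunc F) a ∧
    aeval ζ a = x * aeval ζ v

namespace HasEvalAt

variable {ζ : K} {A B : RatFunc F} {x y : K}

theorem polynomial (p : F[X]) : HasEvalAt ζ (algebraMap F[X] (RatFunc F) p) (aeval ζ p) :=
  ⟨p, 1, by simp, by simp, by simp⟩

theorem X : HasEvalAt ζ (RatFunc.X : RatFunc F) ζ := by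
  simpa using polynomial (ζ := ζ) (Polynomial.X : F[X])

theorem one : HasEvalAt ζ (1 : RatFunc F) 1 := by
  simpa using polynomial (ζ := ζ) (1 : F[X])

theorem zero : HasEvalAt ζ (0 : RatFunc F) 0 := by
  simpa using polynomial (ζ := ζ) (0 : F[X])

theorem neg (hA : HasEvalAt ζ A x) : HasEvalAt ζ (-A) (-x) := by
  obtain ⟨a, v, hv, hA, ha⟩ := hA
  exact ⟨-a, v, hv, by rw [map_neg, ← hA, neg_mul], by rw [map_neg, ha, neg_mul]⟩

theorem add (hA : HasEvalAt ζ A x) (hB : HasEvalAt ζ B y) : HasEvalAt ζ (A + B) (x + y) := by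
  obtain ⟨a, v, hv, hA, ha⟩ := hA
  obtain ⟨b, w, hw, hB, hb⟩ := hB
  refine ⟨a * w + b * v, v * w, by simp [hv, hw], ?_, ?_⟩
  · simp only [map_add, map_mul, ← hA, ← hB]
    ring
  · simp only [map_add, map_mul, ha, hb]
    ring

theorem sub (hA : HasEvalAt ζ A x) (hB : HasEvalAt ζ B y) : HasEvalAt ζ (A - B) (x - y) := by
  simpa [sub_eq_add_neg] using hA.add hB.neg

theorem mul (hA : HasEvalAt ζ A x) (hB : HasEvalAt ζ B y) : HasEvalAt ζ (A * B) (x * y) := by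
  obtain ⟨a, v, hv, hA, ha⟩ := hA
  obtain ⟨b, w, hw, hB, hb⟩ := hB
  refine ⟨a * b, v * w, by simp [hv, hw], ?_, ?_⟩
  · simp only [map_mul, ← hA, ← hB]
    ring
  · simp only [map_mul, ha, hb]
    ring

theorem inv (hA : HasEvalAt ζ A x) (hx : x ≠ 0) : HasEvalAt ζ A⁻¹ x⁻¹ := by
  obtain ⟨a, v, hv, hA, ha⟩ := hA
  have hA0 : A ≠ 0 := by
    rintro rfl
    rw [zero_mul, eq_comm, map_eq_zero_iff _ (IsFractionRing.injective _ _)] at hA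
    simp [hA, hv, hx] at ha
  refine ⟨v, a, by simp [ha, hv, hx], ?_, by rw [ha]; field_simp⟩
  rw [← hA]
  field_simp

theorem div (hA : HasEvalAt ζ A x) (hB : HasEvalAt ζ B y) (hy : y ≠ 0) :
    HasEvalAt ζ (A / B) (x / y) := by
  simpa [div_eq_mul_inv] using hA.mul (hB.inv hy)

theorem pow (hA : HasEvalAt ζ A x) (k : ℕ) : HasEvalAt ζ (A ^ k) (x ^ k) := by
  induction k with
  | zero => simpa using one
  | succ k ih => simpa [pow_succ] using ih.mul hA

theorem zpow (hA : HasEvalAt ζ A x) (hx : x ≠ 0) (e : ℤ) : HasEvalAt ζ (A ^ e) (x ^ e) := by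
  cases e with
  | ofNat k => simpa using hA.pow k
  | negSucc k => simpa [zpow_negSucc] using (hA.pow (k + 1)).inv (pow_ne_zero _ hx)

theorem sum {ι : Type*} {s : Finset ι} {A : ι → RatFunc F} {x : ι → K}
    (h : ∀ i ∈ s, HasEvalAt ζ (A i) (x i)) :
    HasEvalAt ζ (∑ i ∈ s, A i) (∑ i ∈ s, x i) := by
  classical
  induction s using Finset.induction_on with
  | empty => simpa using zero
  | insert i s hi ih =>
    rw [sum_insert hi, sum_insert hi]
    exact (h i (mem_insert_self i s)).add (ih fun j hj => h j (mem_insert_of_mem hj))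

theorem prod {ι : Type*} {s : Finset ι} {A : ι → RatFunc F} {x : ι → K}
    (h : ∀ i ∈ s, HasEvalAt ζ (A i) (x i)) :
    HasEvalAt ζ (∏ i ∈ s, A i) (∏ i ∈ s, x i) := by
  classical
  induction s using Finset.induction_on with
  | empty => simpa using one
  | insert i s hi ih =>
    rw [prod_insert hi, prod_insert hi]
    exact (h i (mem_insert_self i s)).mul (ih fun j hj => h j (mem_insert_of_mem hj))

theorem qPochhammer (hA : HasEvalAt ζ A x) (hB : HasEvalAt ζ B y) (k : ℕ) :
    HasEvalAt ζ (_root_.qPochhammer A B k) (_root_.qPochhammer x y k) :=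
  prod fun j _ => one.sub (hA.mul (hB.pow j))

end HasEvalAt

end RatFunc

theorem CongrModCyclo.of_hasEvalAt {K : Type*} [Field K] [CharZero K] {ζ : K} {n : ℕ}
    (hζ : IsPrimitiveRoot ζ n) (hn : 0 < n) {A B : RatFunc ℚ} {x : K}
    (hA : RatFunc.HasEvalAt ζ A x) (hB : RatFunc.HasEvalAt ζ B x) : CongrModCyclo n 1 A B := by
  obtain ⟨a, v, hv, hA, ha⟩ := hA
  obtain ⟨b, w, hw, hB, hb⟩ := hB
  have hdvd (p : ℚ[X]) : cyclotomic n ℚ ∣ p ↔ aeval ζ p = 0 := by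
    rw [cyclotomic_eq_minpoly_rat hζ hn, minpoly.dvd_iff]
  obtain ⟨u, hu⟩ := (hdvd (a * w - b * v)).2 (by simp only [map_sub, map_mul, ha, hb]; ring)
  refine ⟨u, v * w, by simp [hdvd, hv, hw], ?_⟩
  rw [pow_one, ← hu, map_sub, map_mul, map_mul, map_mul, ← hA, ← hB]
  ring

theorem IsPrimitiveRoot.neg_one_pow_mul_zpow_eq {K : Type*} [Field K] {ζ : K} {n m s : ℕ}
    (hζ : IsPrimitiveRoot ζ n) (hm : 1 ≤ m) (hs : n + 1 = 2 * m + 2 * s) :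
    (-1) ^ ((n - 1) / 2 + m - 1) * ζ ^ ((((n : ℤ) ^ 2 - 1) / 4) - (m : ℤ) ^ 2 - (m : ℤ) + 1)
      = (-1) ^ s * ζ ^ (2 * s) / ζ ^ (s ^ 2) := by
  have hζ0 : ζ ≠ 0 := hζ.ne_zero (by omega)
  have hsign : (-1 : K) ^ ((n - 1) / 2 + m - 1) = (-1) ^ s := by
    rw [show (n - 1) / 2 + m - 1 = 2 * (m - 1) + s by omega, pow_add, pow_mul]
    simp
  have hn : (n : ℤ) = 2 * m + 2 * s - 1 := by omega
  have hexp : ((n : ℤ) ^ 2 - 1) / 4 - m ^ 2 - m + 1 + ((s ^ 2 : ℕ) : ℤ)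
      = n * (s - 1) + ((2 * s : ℕ) : ℤ) := by
    rw [show (n : ℤ) ^ 2 - 1 = 4 * ((m + s) * (m + s - 1)) by rw [hn]; ring,
      Int.mul_ediv_cancel_left _ four_ne_zero, hn]
    push_cast
    ring
  rw [hsign, eq_div_iff (pow_ne_zero _ hζ0), mul_assoc, ← zpow_natCast ζ (s ^ 2),
    ← zpow_add₀ hζ0, hexp, zpow_add₀ hζ0, zpow_mul, zpow_natCast, hζ.pow_eq_one, one_zpow,
    one_mul, zpow_natCast]

theorem qcongruence_thm_general (n m : ℕ) (hn : Odd n)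
    (hm1 : 1 ≤ m) (hm2 : m ≤ (n + 1) / 2) :
    CongrModCyclo n 1
      (∑ k ∈ range (n - m + 1),
        qPoch (q ^ (2 * m - 1)) (q ^ 2) k / qPoch q q k * q ^ (2 * k))
      ((-1) ^ ((n - 1) / 2 + m - 1)
        * q ^ ((((n : ℤ) ^ 2 - 1) / 4) - (m : ℤ) ^ 2 - (m : ℤ) + 1)) := by
  obtain ⟨s, hs⟩ : ∃ s, n + 1 = 2 * m + 2 * s :=
    ⟨(n + 1) / 2 - m, by obtain ⟨t, rfl⟩ := hn; omega⟩
  have hζ := Complex.isPrimitiveRoot_exp n hn.pos.ne'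
  set ζ := Complex.exp (2 * Real.pi * Complex.I / n)
  have hζ0 : ζ ≠ 0 := hζ.ne_zero hn.pos.ne'
  have hq : RatFunc.HasEvalAt ζ q ζ := .X
  refine .of_hasEvalAt hζ hn.pos (x := (-1) ^ s * ζ ^ (2 * s) / ζ ^ (s ^ 2)) ?_ ?_
  · rw [← hζ.pow_sq_mul_sum_qPochhammer hm1 hs, mul_div_cancel_left₀ _ (pow_ne_zero _ hζ0)]
    refine .sum fun k hk => ((((hq.pow _).qPochhammer (hq.pow 2) k).div
      (hq.qPochhammer hq k) ?_).mul (hq.pow _))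
    exact qPochhammer_self_ne_zero fun i hi hik =>
      hζ.pow_ne_one_of_pos_of_lt hi.ne' (by simp at hk; omega)
  · rw [← hζ.neg_one_pow_mul_zpow_eq hm1 hs]
    exact (RatFunc.HasEvalAt.one.neg.pow _).mul (hq.zpow hζ0 _)

theorem qcongruence_thm (n m : ℕ) (hn : Odd n) (hn0 : 0 < n)
    (hm1 : 1 ≤ m) (hm2 : m ≤ (n + 1) / 2) :
    CongrModCyclo n 1
      (∑ k ∈ range (n - m + 1),
        qPoch (q ^ (2 * m - 1)) (q ^ 2) k / qPoch q q k * q ^ (2 * k))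
      ((-1) ^ ((n - 1) / 2 + m - 1)
        * q ^ ((((n : ℤ) ^ 2 - 1) / 4) - (m : ℤ) ^ 2 - (m : ℤ) + 1)) :=
  qcongruence_thm_general n m hn hm1 hm2
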